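/- arXiv:1311.6849 — 2 statements merged into one kernel-verified Lean document; each statement's English description precedes it below -/
import Mathlib

section
/- For each n, let I_n ⊆ ℝ^n be a nonempty closed convex cone, let θ₀ⁿ ∈ ℝ^n, and let Yₙ := θ₀ⁿ + σεₙ, where σ > 0 and εₙ is a random vector with i.i.d. coordinates of mean 0 and variance 1. Set θ_Iⁿ := Π(θ₀ⁿ|I_n) and θ̂_Iⁿ := Π(Yₙ|I_n). If ‖Π(θ_Iⁿ + σεₙ|I_n) − θ_Iⁿ‖² = o_p(n), then ‖θ̂_Iⁿ − θ_Iⁿ‖² = o_p(n). -/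
open MeasureTheory Filter
open scoped ProbabilityTheory

set_option maxHeartbeats 1000000

/-- The metric projection onto a subset `K` of `ℝⁿ`: the (for nonempty closed convex `K`,
unique) point of `K` nearest to `y`. -/
noncomputable def proj {n : ℕ} (K : Set (EuclideanSpace ℝ (Fin n)))
    (y : EuclideanSpace ℝ (Fin n)) : EuclideanSpace ℝ (Fin n) := by
  classical exact if h : ∃ p ∈ K, ∀ q ∈ K, ‖y - p‖ ≤ ‖y - q‖ then h.choose else 0

/-- `X n = o_p(a n)`: `|X n| / a n → 0` in probability, i.e.
`P(|X n| > δ a n) → 0` for every `δ > 0`. -/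
def smallOp {Ω : Type*} [MeasurableSpace Ω] (P : Measure Ω)
    (X : ℕ → Ω → ℝ) (a : ℕ → ℝ) : Prop :=
  ∀ δ : ℝ, 0 < δ → Tendsto (fun n => P {ω | δ * a n < |X n ω|}) atTop (nhds 0)

section Aux

open scoped RealInnerProductSpace

variable {n : ℕ} {K : Set (EuclideanSpace ℝ (Fin n))}

lemma proj_spec (hne : K.Nonempty) (hcl : IsClosed K) (hco : Convex ℝ K)
    (y : EuclideanSpace ℝ (Fin n)) :
    proj K y ∈ K ∧ ∀ q ∈ K, ‖y - proj K y‖ ≤ ‖y - q‖ := by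
  have hex : ∃ p ∈ K, ∀ q ∈ K, ‖y - p‖ ≤ ‖y - q‖ := by
    obtain ⟨p, hp, hpd⟩ := hcl.exists_infDist_eq_dist hne y
    refine ⟨p, hp, fun q hq => ?_⟩
    rw [← dist_eq_norm, ← dist_eq_norm, ← hpd]
    exact Metric.infDist_le_dist_of_mem hq
  unfold proj
  rw [dif_pos hex]
  exact hex.choose_spec

lemma proj_inner (hne : K.Nonempty) (hcl : IsClosed K) (hco : Convex ℝ K)
    (y : EuclideanSpace ℝ (Fin n)) :
    ∀ q ∈ K, ⟪y - proj K y, q - proj K y⟫ ≤ 0 := by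
  obtain ⟨hmem, hmin⟩ := proj_spec hne hcl hco y
  intro q hq
  set p := proj K y with hp
  by_contra hpos
  push_neg at hpos
  have hqp : (0 : ℝ) < ‖q - p‖ ^ 2 := by
    rcases eq_or_ne q p with rfl | hne'
    · simp at hpos
    · exact pow_pos (norm_pos_iff.mpr (sub_ne_zero.mpr hne')) 2
  set s : ℝ := ⟪y - p, q - p⟫ with hs
  set T : ℝ := min 1 (s / ‖q - p‖ ^ 2) with hT
  have hT0 : 0 < T := lt_min one_pos (div_pos hpos hqp)
  have hT1 : T ≤ 1 := min_le_left _ _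
  have hw : p + T • (q - p) ∈ K := by
    have h1 : (1 - T) • p + T • q ∈ K :=
      hco hmem hq (by linarith) (le_of_lt hT0) (by ring)
    have h2 : (1 - T) • p + T • q = p + T • (q - p) := by module
    rwa [h2] at h1
  have hmin' : ‖y - p‖ ≤ ‖y - (p + T • (q - p))‖ := hmin _ hw
  have hmin2 : ‖y - p‖ ^ 2 ≤ ‖y - (p + T • (q - p))‖ ^ 2 :=
    pow_le_pow_left₀ (norm_nonneg _) hmin' 2
  have h2 : ‖T • (q - p)‖ ^ 2 = T ^ 2 * ‖q - p‖ ^ 2 := by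
    rw [norm_smul, mul_pow, Real.norm_eq_abs, sq_abs]
  have hexp : ‖y - (p + T • (q - p))‖ ^ 2
      = ‖y - p‖ ^ 2 - 2 * (T * s) + T ^ 2 * ‖q - p‖ ^ 2 := by
    have h1 : y - (p + T • (q - p)) = (y - p) - T • (q - p) := by module
    rw [h1, norm_sub_sq_real, real_inner_smul_right, h2, ← hs]
  have hTs : T * ‖q - p‖ ^ 2 ≤ s := by
    rcases le_total 1 (s / ‖q - p‖ ^ 2) with h | h
    · rw [hT, min_eq_left h, one_mul]
      have := (le_div_iff₀ hqp).mp h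
      linarith
    · rw [hT, min_eq_right h, div_mul_cancel₀ _ (ne_of_gt hqp)]
  nlinarith [mul_le_mul_of_nonneg_left hTs (le_of_lt hT0)]

/-- The key deterministic inequality: for a closed convex cone `K`,
`‖Π(θ₀+e) - Π(θ₀)‖² ≤ 2‖e‖ ‖Π(Π(θ₀)+e) - Π(θ₀)‖`. -/
lemma key_ineq (hne : K.Nonempty) (hcl : IsClosed K) (hco : Convex ℝ K)
    (hcone : ∀ θ ∈ K, ∀ t : ℝ, 0 < t → t • θ ∈ K)
    (θ₀ e : EuclideanSpace ℝ (Fin n)) :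
    ‖proj K (θ₀ + e) - proj K θ₀‖ ^ 2 ≤
      2 * ‖e‖ * ‖proj K (proj K θ₀ + e) - proj K θ₀‖ := by
  set c := proj K θ₀ with hc
  set a := proj K (θ₀ + e) with ha
  set b := proj K (c + e) with hb
  have hcK : c ∈ K := (proj_spec hne hcl hco θ₀).1
  have haK : a ∈ K := (proj_spec hne hcl hco (θ₀ + e)).1
  have hbK : b ∈ K := (proj_spec hne hcl hco (c + e)).1
  -- orthogonality ⟪y - Πy, Πy⟫ = 0 (cone property)
  have self_orth : ∀ y : EuclideanSpace ℝ (Fin n), ⟪y - proj K y, proj K y⟫ = 0 := by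
    intro y
    have hpK : proj K y ∈ K := (proj_spec hne hcl hco y).1
    have h1 := proj_inner hne hcl hco y ((2 : ℝ) • proj K y) (hcone _ hpK 2 two_pos)
    have h2 := proj_inner hne hcl hco y ((1 / 2 : ℝ) • proj K y)
      (hcone _ hpK (1 / 2) (by norm_num))
    have e1 : (2 : ℝ) • proj K y - proj K y = proj K y := by module
    have e2 : (1 / 2 : ℝ) • proj K y - proj K y = -((1 / 2 : ℝ) • proj K y) := by module
    rw [e1] at h1
    rw [e2, inner_neg_right, real_inner_smul_right] at h2
    linarith
  -- polar property: ⟪y - Πy, q⟫ ≤ 0 for all q ∈ K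
  have polar : ∀ y : EuclideanSpace ℝ (Fin n), ∀ q ∈ K, ⟪y - proj K y, q⟫ ≤ 0 := by
    intro y q hq
    have h1 := proj_inner hne hcl hco y q hq
    have h2 := self_orth y
    have h3 : ⟪y - proj K y, q - proj K y⟫
        = ⟪y - proj K y, q⟫ - ⟪y - proj K y, proj K y⟫ := inner_sub_right _ _ _
    linarith
  -- K is closed under addition
  have haddK : ∀ p q : EuclideanSpace ℝ (Fin n), p ∈ K → q ∈ K → p + q ∈ K := by
    intro p q hp hq
    have h1 : (1 / 2 : ℝ) • p + (1 / 2 : ℝ) • q ∈ K :=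
      hco hp hq (by norm_num) (by norm_num) (by norm_num)
    have h2 := hcone _ h1 2 two_pos
    have h3 : (2 : ℝ) • ((1 / 2 : ℝ) • p + (1 / 2 : ℝ) • q) = p + q := by module
    rwa [h3] at h2
  have horthc : ⟪θ₀ - c, c⟫ = 0 := self_orth θ₀
  -- ‖a‖² = ⟪θ₀ + e, a⟫ and ‖b‖² = ⟪c + e, b⟫
  have hA : ‖a‖ ^ 2 = ⟪θ₀ + e, a⟫ := by
    have h1 := self_orth (θ₀ + e)
    have h2 : ⟪θ₀ + e - a, a⟫ = ⟪θ₀ + e, a⟫ - ⟪a, a⟫ := inner_sub_left _ _ _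
    have h3 : ⟪a, a⟫ = ‖a‖ ^ 2 := real_inner_self_eq_norm_sq a
    rw [← ha] at h1
    linarith
  have hB : ‖b‖ ^ 2 = ⟪c + e, b⟫ := by
    have h1 := self_orth (c + e)
    have h2 : ⟪c + e - b, b⟫ = ⟪c + e, b⟫ - ⟪b, b⟫ := inner_sub_left _ _ _
    have h3 : ⟪b, b⟫ = ‖b‖ ^ 2 := real_inner_self_eq_norm_sq b
    rw [← hb] at h1
    linarith
  -- ‖a‖² ≤ ‖b‖²
  have hab : ‖a‖ ^ 2 ≤ ‖b‖ ^ 2 := by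
    have hdec : θ₀ + e = c + e + (θ₀ - c) := by module
    have h2 : ⟪θ₀ + e, a⟫ = ⟪c + e, a⟫ + ⟪θ₀ - c, a⟫ := by
      rw [hdec, inner_add_left]
    have h3 : ⟪θ₀ - c, a⟫ ≤ 0 := by
      have := polar θ₀ a haK; rwa [← hc] at this
    have h4 : ⟪c + e - b, a⟫ ≤ 0 := by
      have := polar (c + e) a haK; rwa [← hb] at this
    have h5 : ⟪c + e - b, a⟫ = ⟪c + e, a⟫ - ⟪b, a⟫ := inner_sub_left _ _ _
    have h6 : ⟪b, a⟫ ≤ ‖b‖ * ‖a‖ := real_inner_le_norm b a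
    nlinarith [norm_nonneg a, norm_nonneg b]
  -- ⟪a, c⟫ ≥ ‖c‖² + ⟪e, c⟫
  have hac : ‖c‖ ^ 2 + ⟪e, c⟫ ≤ ⟪a, c⟫ := by
    have hacK : a + c ∈ K := haddK a c haK hcK
    have h1 := proj_inner hne hcl hco (θ₀ + e) (a + c) hacK
    rw [← ha] at h1
    have h2 : a + c - a = c := by module
    rw [h2] at h1
    have hdec : θ₀ + e - a = (θ₀ - c) + c + e - a := by module
    have h3 : ⟪θ₀ + e - a, c⟫
        = ⟪θ₀ - c, c⟫ + ⟪c, c⟫ + ⟪e, c⟫ - ⟪a, c⟫ := by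
      rw [hdec, inner_sub_left, inner_add_left, inner_add_left]
    have h4 : ⟪c, c⟫ = ‖c‖ ^ 2 := real_inner_self_eq_norm_sq c
    linarith
  -- ⟪b, c⟫ = ⟪e, b⟫ + ‖c‖² - ‖b - c‖²
  have hbc : ⟪b, c⟫ = ⟪e, b⟫ + ‖c‖ ^ 2 - ‖b - c‖ ^ 2 := by
    have h1 : ‖b - c‖ ^ 2 = ‖b‖ ^ 2 - 2 * ⟪b, c⟫ + ‖c‖ ^ 2 := norm_sub_sq_real b c
    have h2 : ⟪c + e, b⟫ = ⟪c, b⟫ + ⟪e, b⟫ := inner_add_left _ _ _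
    have h3 : ⟪c, b⟫ = ⟪b, c⟫ := real_inner_comm b c
    linarith
  -- put it together
  have hexp : ‖a - c‖ ^ 2 = ‖a‖ ^ 2 - 2 * ⟪a, c⟫ + ‖c‖ ^ 2 := norm_sub_sq_real a c
  have hb2 : ‖b‖ ^ 2 = ⟪b, c⟫ + ⟪e, b⟫ := by
    have h2 : ⟪c + e, b⟫ = ⟪c, b⟫ + ⟪e, b⟫ := inner_add_left _ _ _
    have h3 : ⟪c, b⟫ = ⟪b, c⟫ := real_inner_comm b c
    linarith
  have hip : ⟪e, b - c⟫ = ⟪e, b⟫ - ⟪e, c⟫ := inner_sub_right _ _ _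
  have hipn : ⟪e, b - c⟫ ≤ ‖e‖ * ‖b - c‖ := real_inner_le_norm e (b - c)
  have hBC : (0:ℝ) ≤ ‖b - c‖ ^ 2 := sq_nonneg _
  linarith

end Aux

lemma map_eval_pi_prob {ι : Type*} [Fintype ι] [DecidableEq ι] (μ : ι → Measure ℝ)
    [∀ i, IsProbabilityMeasure (μ i)] (i : ι) :
    Measure.map (Function.eval i) (Measure.pi μ) = μ i := by
  refine Measure.ext fun s hs => ?_
  rw [Measure.map_apply (measurable_pi_apply i) hs, Set.eval_preimage, Measure.pi_pi]
  rw [Finset.prod_eq_single i (fun j _ hj => by simp [Function.update_of_ne hj])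
    (fun h => absurd (Finset.mem_univ i) h)]
  simp

/-- Lemma 4: for each `n`, let `I_n ⊆ ℝⁿ` be a nonempty closed convex cone,
`Yₙ = θ₀ⁿ + σεₙ` with `εₙ` having i.i.d. coordinates of mean 0 and variance 1, and let
`θ_Iⁿ = Π(θ₀ⁿ|I_n)`.  If `‖Π(θ_Iⁿ + σεₙ|I_n) − θ_Iⁿ‖² = o_p(n)`, then
`‖Π(Yₙ|I_n) − θ_Iⁿ‖² = o_p(n)`. -/
theorem stmt7 {Ω : Type*} [MeasureSpace Ω] [IsProbabilityMeasure (ℙ : Measure Ω)]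
    (I : ∀ n : ℕ, Set (EuclideanSpace ℝ (Fin n)))
    (hne : ∀ n, (I n).Nonempty) (hclosed : ∀ n, IsClosed (I n))
    (hconv : ∀ n, Convex ℝ (I n))
    (hcone : ∀ n, ∀ θ ∈ I n, ∀ t : ℝ, 0 < t → t • θ ∈ I n)
    (θ₀ : ∀ n : ℕ, EuclideanSpace ℝ (Fin n))
    (σ : ℝ) (hσ : 0 < σ)
    (ε : ∀ n : ℕ, Ω → EuclideanSpace ℝ (Fin n))
    (μ : Measure ℝ) [IsProbabilityMeasure μ]
    (hiid : ∀ n, Measure.map (fun ω i => ε n ω i) ℙ = Measure.pi fun _ : Fin n => μ)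
    (hmean : ∫ x, x ∂μ = 0) (hvar : ∫ x, x ^ 2 ∂μ = 1)
    (hcons : smallOp ℙ
      (fun n ω => ‖proj (I n) (proj (I n) (θ₀ n) + σ • ε n ω) - proj (I n) (θ₀ n)‖ ^ 2)
      (fun n => (n : ℝ))) :
    smallOp ℙ
      (fun n ω => ‖proj (I n) (θ₀ n + σ • ε n ω) - proj (I n) (θ₀ n)‖ ^ 2)
      (fun n => (n : ℝ)) := by
  classical
  -- integrability of x ↦ x² under μ
  have hint : Integrable (fun x : ℝ => x ^ 2) μ := by
    by_contra h
    rw [integral_undef h] at hvar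
    exact one_ne_zero hvar.symm
  have hμ2 : ∫⁻ r, ENNReal.ofReal (r ^ 2) ∂μ = 1 := by
    rw [← ofReal_integral_eq_lintegral_ofReal hint
      (Filter.Eventually.of_forall fun x => sq_nonneg x), hvar, ENNReal.ofReal_one]
  -- a.e.-measurability of the coordinates map
  have hae : ∀ n, AEMeasurable (fun ω (i : Fin n) => ε n ω i) ℙ := by
    intro n
    by_contra h
    have h0 := hiid n
    rw [Measure.map_of_not_aemeasurable h] at h0
    have h1 := congrArg (fun m : Measure (Fin n → ℝ) => m Set.univ) h0
    simp [measure_univ] at h1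
  -- norm-squared is a.e.-measurable
  have haeN : ∀ n, AEMeasurable (fun ω => ENNReal.ofReal (‖ε n ω‖ ^ 2)) ℙ := by
    intro n
    have hg : Measurable (fun x : Fin n → ℝ => ENNReal.ofReal (∑ i, (x i) ^ 2)) := by
      apply Measurable.ennreal_ofReal
      exact Finset.measurable_sum _ fun i _ => (measurable_pi_apply i).pow_const 2
    have hkey : (fun ω => ENNReal.ofReal (‖ε n ω‖ ^ 2))
        = (fun x : Fin n → ℝ => ENNReal.ofReal (∑ i, (x i) ^ 2)) ∘ (fun ω i => ε n ω i) := by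
      funext ω
      simp only [Function.comp_apply]
      congr 1
      rw [EuclideanSpace.norm_eq, Real.sq_sqrt (Finset.sum_nonneg fun i _ => sq_nonneg _)]
      simp [sq_abs]
    rw [hkey]
    exact hg.comp_aemeasurable (hae n)
  -- second moment of the norm
  have hlin : ∀ n, ∫⁻ ω, ENNReal.ofReal (‖ε n ω‖ ^ 2) ∂ℙ = n := by
    intro n
    have hkey : (fun ω => ENNReal.ofReal (‖ε n ω‖ ^ 2))
        = fun ω => ∑ i, ENNReal.ofReal ((ε n ω i) ^ 2) := by
      funext ω
      rw [EuclideanSpace.norm_eq, Real.sq_sqrt (Finset.sum_nonneg fun i _ => sq_nonneg _)]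
      rw [ENNReal.ofReal_sum_of_nonneg fun i _ => sq_nonneg _]
      simp [sq_abs]
    rw [hkey, lintegral_finset_sum' _ (fun i _ => by
      exact (((measurable_pi_apply i).pow_const 2).ennreal_ofReal).comp_aemeasurable (hae n))]
    have hterm : ∀ i : Fin n, ∫⁻ ω, ENNReal.ofReal ((ε n ω i) ^ 2) ∂ℙ = 1 := by
      intro i
      have hmf : Measurable fun r : ℝ => ENNReal.ofReal (r ^ 2) := by fun_prop
      have h1 : ∫⁻ ω, ENNReal.ofReal ((ε n ω i) ^ 2) ∂ℙ
          = ∫⁻ x : Fin n → ℝ, ENNReal.ofReal ((x i) ^ 2)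
              ∂(Measure.map (fun ω i => ε n ω i) ℙ) := by
        rw [lintegral_map' (((measurable_pi_apply i).pow_const 2).ennreal_ofReal).aemeasurable
          (hae n)]
      have h2 : ∫⁻ x : Fin n → ℝ, ENNReal.ofReal ((x i) ^ 2)
            ∂(Measure.pi fun _ : Fin n => μ) = ∫⁻ r : ℝ, ENNReal.ofReal (r ^ 2) ∂μ :=
        calc ∫⁻ x : Fin n → ℝ, ENNReal.ofReal ((x i) ^ 2) ∂(Measure.pi fun _ : Fin n => μ)
            = ∫⁻ r : ℝ, ENNReal.ofReal (r ^ 2)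
                ∂(Measure.map (Function.eval i) (Measure.pi fun _ : Fin n => μ)) :=
              (lintegral_map hmf (measurable_pi_apply i)).symm
          _ = ∫⁻ r : ℝ, ENNReal.ofReal (r ^ 2) ∂μ := by
              rw [map_eval_pi_prob (fun _ : Fin n => μ) i]
      rw [h1, hiid n, h2]
      exact hμ2
    simp [hterm]
  -- main argument
  intro δ hδ
  rw [ENNReal.tendsto_atTop_zero]
  intro η hη
  set t : ℝ := (min η 1).toReal with ht
  have hmin_ne_top : min η 1 ≠ ⊤ := ne_top_of_le_ne_top ENNReal.one_ne_top (min_le_right η 1)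
  have htpos : 0 < t :=
    ENNReal.toReal_pos (lt_min hη zero_lt_one).ne' hmin_ne_top
  set M : ℝ := 2 / t with hM
  have hMpos : 0 < M := by positivity
  set δ' : ℝ := δ ^ 2 / (4 * σ ^ 2 * M) with hδ'
  have hδ'pos : 0 < δ' := by positivity
  have hcons' := hcons δ' hδ'pos
  rw [ENNReal.tendsto_atTop_zero] at hcons'
  obtain ⟨N, hN⟩ := hcons' (ENNReal.ofReal (t / 2)) (ENNReal.ofReal_pos.2 (by positivity))
  refine ⟨max N 1, fun n hn => ?_⟩
  have hn1 : 1 ≤ n := le_trans (le_max_right N 1) hn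
  have hnN : N ≤ n := le_trans (le_max_left N 1) hn
  have hnpos : (0 : ℝ) < n := by exact_mod_cast hn1
  -- event inclusion
  have hsub : {ω | δ * n < |‖proj (I n) (θ₀ n + σ • ε n ω) - proj (I n) (θ₀ n)‖ ^ 2|}
      ⊆ {ω | M * n < ‖ε n ω‖ ^ 2}
        ∪ {ω | δ' * n
            < |‖proj (I n) (proj (I n) (θ₀ n) + σ • ε n ω) - proj (I n) (θ₀ n)‖ ^ 2|} := by
    intro ω hω
    simp only [Set.mem_setOf_eq, Set.mem_union] at hω ⊢
    by_contra hcon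
    push_neg at hcon
    obtain ⟨h1, h2⟩ := hcon
    rw [abs_of_nonneg (sq_nonneg _)] at hω h2
    have hkey := key_ineq (hne n) (hclosed n) (hconv n) (hcone n) (θ₀ n) (σ • ε n ω)
    have hnorm : ‖σ • ε n ω‖ = σ * ‖ε n ω‖ := by
      rw [norm_smul, Real.norm_eq_abs, abs_of_pos hσ]
    rw [hnorm] at hkey
    set A := ‖proj (I n) (θ₀ n + σ • ε n ω) - proj (I n) (θ₀ n)‖ with hA
    set B := ‖proj (I n) (proj (I n) (θ₀ n) + σ • ε n ω) - proj (I n) (θ₀ n)‖ with hB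
    set E := ‖ε n ω‖ with hE
    have hEnn : 0 ≤ E := norm_nonneg _
    have hBnn : 0 ≤ B := norm_nonneg _
    have hE2 : E ^ 2 ≤ M * n := h1
    have hB2 : B ^ 2 ≤ δ' * n := h2
    have hprod : E ^ 2 * B ^ 2 ≤ (M * n) * (δ' * n) :=
      mul_le_mul hE2 hB2 (sq_nonneg _) (le_of_lt (mul_pos hMpos hnpos))
    have hδ'' : 4 * σ ^ 2 * M * δ' = δ ^ 2 := by
      rw [hδ']
      field_simp
    have c1 : δ * n < 2 * (σ * E) * B := lt_of_lt_of_le hω hkey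
    have c2 : (δ * (n:ℝ)) ^ 2 < (2 * (σ * E) * B) ^ 2 :=
      pow_lt_pow_left₀ c1 (le_of_lt (mul_pos hδ hnpos)) (by norm_num)
    have c3 : (2 * (σ * E) * B) ^ 2 = 4 * σ ^ 2 * (E ^ 2 * B ^ 2) := by ring
    have c5 : 4 * σ ^ 2 * ((M * (n:ℝ)) * (δ' * n)) = (δ * n) ^ 2 := by
      linear_combination ((n:ℝ))^2 * hδ''
    have c6 : 4 * σ ^ 2 * (E ^ 2 * B ^ 2) ≤ 4 * σ ^ 2 * ((M * (n:ℝ)) * (δ' * n)) :=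
      mul_le_mul_of_nonneg_left hprod (by positivity)
    linarith
  -- Markov bound
  have hmarkov : ℙ {ω | M * n < ‖ε n ω‖ ^ 2} ≤ (ENNReal.ofReal M)⁻¹ := by
    have hsub2 : {ω | M * n < ‖ε n ω‖ ^ 2}
        ⊆ {ω | ENNReal.ofReal (M * n) ≤ ENNReal.ofReal (‖ε n ω‖ ^ 2)} :=
      fun ω hω => ENNReal.ofReal_le_ofReal (le_of_lt hω)
    have h2 := mul_meas_ge_le_lintegral₀ (haeN n) (ENNReal.ofReal (M * n))
    rw [hlin n] at h2
    have hMn : (0 : ℝ) < M * n := mul_pos hMpos hnpos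
    have hne0 : ENNReal.ofReal (M * n) ≠ 0 := (ENNReal.ofReal_pos.2 hMn).ne'
    have hneT : ENNReal.ofReal (M * n) ≠ ⊤ := ENNReal.ofReal_ne_top
    calc ℙ {ω | M * n < ‖ε n ω‖ ^ 2}
        ≤ ℙ {ω | ENNReal.ofReal (M * n) ≤ ENNReal.ofReal (‖ε n ω‖ ^ 2)} :=
          measure_mono hsub2
      _ = (ENNReal.ofReal (M * n))⁻¹ * (ENNReal.ofReal (M * n)
            * ℙ {ω | ENNReal.ofReal (M * n) ≤ ENNReal.ofReal (‖ε n ω‖ ^ 2)}) := by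
          rw [← mul_assoc, ENNReal.inv_mul_cancel hne0 hneT, one_mul]
      _ ≤ (ENNReal.ofReal (M * n))⁻¹ * n := mul_le_mul_right h2 _
      _ = (ENNReal.ofReal M)⁻¹ := by
          rw [ENNReal.ofReal_mul (le_of_lt hMpos), ENNReal.ofReal_natCast,
            ENNReal.mul_inv (Or.inr (ENNReal.natCast_ne_top n)) (Or.inl ENNReal.ofReal_ne_top),
            mul_assoc, ENNReal.inv_mul_cancel (Nat.cast_ne_zero.mpr (by omega))
              (ENNReal.natCast_ne_top n), mul_one]
  have hinv : (ENNReal.ofReal M)⁻¹ = ENNReal.ofReal (t / 2) := by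
    rw [← ENNReal.ofReal_inv_of_pos hMpos, hM, inv_div]
  calc ℙ {ω | δ * n < |‖proj (I n) (θ₀ n + σ • ε n ω) - proj (I n) (θ₀ n)‖ ^ 2|}
      ≤ ℙ ({ω | M * n < ‖ε n ω‖ ^ 2}
          ∪ {ω | δ' * n
              < |‖proj (I n) (proj (I n) (θ₀ n) + σ • ε n ω) - proj (I n) (θ₀ n)‖ ^ 2|}) :=
        measure_mono hsub
    _ ≤ ℙ {ω | M * n < ‖ε n ω‖ ^ 2}
          + ℙ {ω | δ' * n
              < |‖proj (I n) (proj (I n) (θ₀ n) + σ • ε n ω) - proj (I n) (θ₀ n)‖ ^ 2|} :=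
        measure_union_le _ _
    _ ≤ ENNReal.ofReal (t / 2) + ENNReal.ofReal (t / 2) := by
        exact add_le_add (hinv ▸ hmarkov) (hN n hnN)
    _ = ENNReal.ofReal t := by
        rw [← ENNReal.ofReal_add (by positivity) (by positivity), add_halves]
    _ = min η 1 := ENNReal.ofReal_toReal hmin_ne_top
    _ ≤ η := min_le_left _ _
end

section
/- For each n, let I_n ⊆ ℝ^n be a nonempty closed convex cone containing a linear subspace S_n of fixed dimension k (not depending on n), let D_n := −I_n, and let θ₀ⁿ ∈ S_n. Let Yₙ := θ₀ⁿ + σεₙ, where σ > 0 and εₙ has i.i.d. coordinates of mean 0 and variance 1. Assume the consistency conditions ‖Π(θ₀ⁿ + σεₙ|I_n) − θ₀ⁿ‖² = o_p(n) and ‖Π(θ₀ⁿ + σεₙ|D_n) − θ₀ⁿ‖² = o_p(n). Then the double-cone statistic satisfies T(Yₙ) = o_p(1). -/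
/-!
Write `y = θ₀ + σε` and `e = ‖y - θ₀‖`. By the law of large numbers `e² ≥ σ²n/2` with
probability tending to one, so for every fixed `s > 0` the consistency conditions put both
`Π(y|I)` and `Π(y|D)` within `s e` of `θ₀` with probability tending to one. On that event the
argument is deterministic: since `S ⊆ I`, `Π(y|I)` is at least as close to `y` as `Π(y|S)`, so
`‖y - Π(y|S)‖ ≥ (1 - s) e`, and Pythagoras in `S` (which contains `θ₀`) leaves
`‖Π(y|S) - θ₀‖² ≤ 2 s e²`. Both numerators of `T(y)` are then at most `5 s e²` while the
denominator is at least `e² / 4`, so `T(y) ≤ 20 s`.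
-/

open MeasureTheory Filter
open scoped ProbabilityTheory

/-- The double-cone statistic
`T(y) := max{‖Π(y|S) − Π(y|I)‖², ‖Π(y|S) − Π(y|D)‖²} / ‖y − Π(y|S)‖²` for `y ∉ S`
(and `T(y) := 0` for `y ∈ S`). -/
noncomputable def Tstat {n : ℕ} (S I D : Set (EuclideanSpace ℝ (Fin n)))
    (y : EuclideanSpace ℝ (Fin n)) : ℝ := by
  classical exact if y ∈ S then 0
    else max (‖proj S y - proj I y‖ ^ 2) (‖proj S y - proj D y‖ ^ 2) / ‖y - proj S y‖ ^ 2

open ProbabilityTheory Finset Topology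

section OrthogonalProjection

variable {E : Type*} [NormedAddCommGroup E] [InnerProductSpace ℝ E]
  (K : Submodule ℝ E) [K.HasOrthogonalProjection]

theorem Submodule.norm_sub_sq_eq_norm_sub_starProjection_sq_add {y q : E} (hq : q ∈ K) :
    ‖y - q‖ ^ 2 = ‖y - K.starProjection y‖ ^ 2 + ‖K.starProjection y - q‖ ^ 2 := by
  have h := norm_add_sq_eq_norm_sq_add_norm_sq_real
    (K.starProjection_inner_eq_zero y _ (K.sub_mem (K.starProjection_apply_mem y) hq))
  rwa [sub_add_sub_cancel, ← sq, ← sq, ← sq] at h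

theorem Submodule.max_norm_starProjection_sub_sq_le {y θ p q : E} {s : ℝ} (hθ : θ ∈ K)
    (hs₀ : 0 ≤ s) (hs : s ≤ 1 / 2) (hp : ‖y - p‖ ≤ ‖y - K.starProjection y‖)
    (hpθ : ‖p - θ‖ ≤ s * ‖y - θ‖) (hqθ : ‖q - θ‖ ≤ s * ‖y - θ‖) :
    max (‖K.starProjection y - p‖ ^ 2) (‖K.starProjection y - q‖ ^ 2) ≤
      20 * s * ‖y - K.starProjection y‖ ^ 2 := by
  set e := ‖y - θ‖
  set a := ‖y - K.starProjection y‖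
  set b := ‖K.starProjection y - θ‖
  have hpyth : e ^ 2 = a ^ 2 + b ^ 2 := K.norm_sub_sq_eq_norm_sub_starProjection_sq_add hθ
  have ha : (1 - s) * e ≤ a := by
    linarith [norm_sub_le_norm_sub_add_norm_sub y p θ]
  have ha2 : ((1 - s) * e) ^ 2 ≤ a ^ 2 :=
    pow_le_pow_left₀ (mul_nonneg (by linarith) (norm_nonneg _)) ha 2
  have hb2 : b ^ 2 ≤ 2 * s * e ^ 2 := by nlinarith
  have he2 : e ^ 2 ≤ 4 * a ^ 2 := by
    have : e ≤ 2 * a := by nlinarith [norm_nonneg (y - θ)]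
    nlinarith [norm_nonneg (y - θ)]
  have hnear : ∀ r : E, ‖r - θ‖ ≤ s * e → ‖K.starProjection y - r‖ ^ 2 ≤ 20 * s * a ^ 2 := by
    intro r hr
    rw [norm_sub_rev r θ] at hr
    have htri : ‖K.starProjection y - r‖ ≤ b + s * e := by
      linarith [norm_sub_le_norm_sub_add_norm_sub (K.starProjection y) θ r]
    calc ‖K.starProjection y - r‖ ^ 2 ≤ (b + s * e) ^ 2 :=
          pow_le_pow_left₀ (norm_nonneg _) htri 2
      _ ≤ 2 * b ^ 2 + 2 * (s * e) ^ 2 := by nlinarith [sq_nonneg (b - s * e)]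
      _ ≤ 5 * s * e ^ 2 := by nlinarith [mul_nonneg hs₀ (sq_nonneg e)]
      _ ≤ 20 * s * a ^ 2 := by nlinarith
  exact max_le (hnear p hpθ) (hnear q hqθ)

theorem exists_forall_norm_sub_le_of_complete_convex {C : Set E} (hne : C.Nonempty)
    (hC : IsComplete C) (hconv : Convex ℝ C) (y : E) :
    ∃ p ∈ C, ∀ q ∈ C, ‖y - p‖ ≤ ‖y - q‖ := by
  obtain ⟨p, hp, hmin⟩ := exists_norm_eq_iInf_of_complete_convex hne hC hconv y
  refine ⟨p, hp, fun q hq => hmin ▸ ?_⟩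
  exact ciInf_le ⟨0, Set.forall_mem_range.2 fun _ => norm_nonneg _⟩ (⟨q, hq⟩ : C)

end OrthogonalProjection

section Tstat

variable {n : ℕ} {K : Set (EuclideanSpace ℝ (Fin n))}

theorem proj_mem (hne : K.Nonempty) (hcl : IsClosed K) (hconv : Convex ℝ K)
    (y : EuclideanSpace ℝ (Fin n)) : proj K y ∈ K := by
  have h := exists_forall_norm_sub_le_of_complete_convex hne hcl.isComplete hconv y
  rw [proj, dif_pos h]
  exact h.choose_spec.1

theorem norm_sub_proj_le (hne : K.Nonempty) (hcl : IsClosed K) (hconv : Convex ℝ K)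
    {y q : EuclideanSpace ℝ (Fin n)} (hq : q ∈ K) : ‖y - proj K y‖ ≤ ‖y - q‖ := by
  have h := exists_forall_norm_sub_le_of_complete_convex hne hcl.isComplete hconv y
  rw [proj, dif_pos h]
  exact h.choose_spec.2 q hq

theorem proj_submodule_eq_starProjection (S : Submodule ℝ (EuclideanSpace ℝ (Fin n)))
    (y : EuclideanSpace ℝ (Fin n)) :
    proj (S : Set (EuclideanSpace ℝ (Fin n))) y = S.starProjection y := by
  have hne : (S : Set (EuclideanSpace ℝ (Fin n))).Nonempty := ⟨0, S.zero_mem⟩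
  have hpyth := S.norm_sub_sq_eq_norm_sub_starProjection_sq_add (y := y)
    (proj_mem hne S.closed_of_finiteDimensional S.convex y)
  have hmin := norm_sub_proj_le hne S.closed_of_finiteDimensional S.convex (y := y)
    (S.starProjection_apply_mem y)
  have hsq : ‖S.starProjection y - proj S y‖ ^ 2 ≤ 0 := by
    nlinarith [pow_le_pow_left₀ (norm_nonneg _) hmin 2]
  exact (sub_eq_zero.1 (norm_eq_zero.1 (pow_eq_zero_iff two_ne_zero |>.1
    (le_antisymm hsq (sq_nonneg _))))).symm

theorem Tstat_nonneg (S I D : Set (EuclideanSpace ℝ (Fin n))) (y : EuclideanSpace ℝ (Fin n)) :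
    0 ≤ Tstat S I D y := by
  unfold Tstat
  split_ifs
  exacts [le_rfl, div_nonneg ((sq_nonneg _).trans (le_max_left _ _)) (sq_nonneg _)]

theorem Tstat_le {S : Submodule ℝ (EuclideanSpace ℝ (Fin n))}
    {I D : Set (EuclideanSpace ℝ (Fin n))} (hne : I.Nonempty) (hcl : IsClosed I)
    (hconv : Convex ℝ I) (hSI : (S : Set (EuclideanSpace ℝ (Fin n))) ⊆ I)
    {θ y : EuclideanSpace ℝ (Fin n)} (hθ : θ ∈ S) {s : ℝ} (hs₀ : 0 ≤ s) (hs : s ≤ 1 / 2)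
    (hI : ‖proj I y - θ‖ ^ 2 ≤ s ^ 2 * ‖y - θ‖ ^ 2)
    (hD : ‖proj D y - θ‖ ^ 2 ≤ s ^ 2 * ‖y - θ‖ ^ 2) :
    Tstat S I D y ≤ 20 * s := by
  have hsqrt : ∀ p : EuclideanSpace ℝ (Fin n), ‖p - θ‖ ^ 2 ≤ s ^ 2 * ‖y - θ‖ ^ 2 →
      ‖p - θ‖ ≤ s * ‖y - θ‖ := fun p hp =>
    (pow_le_pow_iff_left₀ (norm_nonneg _) (by positivity) two_ne_zero).1 (by rwa [mul_pow])
  unfold Tstat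
  split_ifs with hy
  · positivity
  rw [proj_submodule_eq_starProjection, div_le_iff₀]
  · exact S.max_norm_starProjection_sub_sq_le hθ hs₀ hs
      (norm_sub_proj_le hne hcl hconv (hSI (S.starProjection_apply_mem y))) (hsqrt _ hI)
      (hsqrt _ hD)
  · refine pow_pos (norm_pos_iff.2 (sub_ne_zero.2 fun h => hy ?_)) 2
    exact h ▸ S.starProjection_apply_mem y

end Tstat

section Probability

theorem tendsto_measure_of_subset_union {α ι : Type*} [MeasurableSpace α] {P : Measure α}
    {l : Filter ι} {A B C : ι → Set α} (hB : Tendsto (fun i => P (B i)) l (𝓝 0))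
    (hC : Tendsto (fun i => P (C i)) l (𝓝 0)) (hsub : ∀ i, A i ⊆ B i ∪ C i) :
    Tendsto (fun i => P (A i)) l (𝓝 0) :=
  tendsto_of_tendsto_of_tendsto_of_le_of_le tendsto_const_nhds (by simpa using hB.add hC)
    (fun _ => bot_le) fun i => (measure_mono (hsub i)).trans (measure_union_le _ _)

variable {α : Type*} [MeasurableSpace α] {μ : Measure α} [IsProbabilityMeasure μ]

theorem MeasureTheory.Measure.infinitePi_map_fin_restrict (n : ℕ) :
    (infinitePi fun _ : ℕ => μ).map (fun ω (i : Fin n) => ω i) = Measure.pi fun _ => μ := by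
  have hind : iIndepFun (fun (i : Fin n) (ω : ℕ → α) => ω i) (infinitePi fun _ : ℕ => μ) :=
    (iIndepFun_infinitePi (P := fun _ => μ) (X := fun _ => id) fun _ => measurable_id).precomp
      Fin.val_injective
  rw [(iIndepFun_iff_map_fun_eq_pi_map fun i => (measurable_pi_apply _).aemeasurable).1 hind]
  simp only [infinitePi_map_eval]

/- The finite products `μ ^ n` are the marginals of the single infinite product `μ ^ ℕ`, on which
the strong law applies; almost sure convergence there gives convergence in probability. -/
theorem tendsto_measure_sum_lt_mul_of_lt_integral {f : α → ℝ} (hf : Measurable f)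
    (hint : Integrable f μ) {c : ℝ} (hc : c < ∫ x, f x ∂μ) :
    Tendsto (fun n : ℕ => Measure.pi (fun _ : Fin n => μ) {x | ∑ i, f (x i) < c * n})
      atTop (𝓝 0) := by
  set ν := Measure.infinitePi fun _ : ℕ => μ
  have hpres : ∀ i, MeasurePreserving (fun ω : ℕ → α => ω i) ν μ :=
    measurePreserving_eval_infinitePi _
  have hslln : ∀ᵐ ω ∂ν, Tendsto (fun n : ℕ => (∑ i ∈ range n, f (ω i)) / n) atTop
      (𝓝 (∫ x, f x ∂μ)) := by
    have hindep : Pairwise fun i j => IndepFun (fun ω : ℕ → α => f (ω i)) (fun ω => f (ω j)) ν :=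
      fun i j hij =>
        (iIndepFun_infinitePi (P := fun _ => μ) (X := fun _ => f) fun _ => hf).indepFun hij
    have hident : ∀ i, IdentDistrib (fun ω : ℕ → α => f (ω i)) (fun ω => f (ω 0)) ν ν := fun i =>
      IdentDistrib.comp ⟨(measurable_pi_apply i).aemeasurable,
        (measurable_pi_apply 0).aemeasurable, by rw [(hpres i).map_eq, (hpres 0).map_eq]⟩ hf
    have hmean : ∫ ω, f (ω 0) ∂ν = ∫ x, f x ∂μ := by
      rw [← (hpres 0).map_eq, integral_map (measurable_pi_apply 0).aemeasurable
        ((hpres 0).map_eq ▸ hf.aestronglyMeasurable)]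
    simpa only [hmean, Function.comp_apply] using strong_law_ae_real _
      (((hpres 0).integrable_comp hf.aestronglyMeasurable).2 hint) hindep hident
  have hmeas : ∀ n : ℕ, Measurable fun ω : ℕ → α => (∑ i ∈ range n, f (ω i)) / n := fun n =>
    (Finset.measurable_sum _ fun i _ => hf.comp (measurable_pi_apply i)).div_const _
  have hprob := tendstoInMeasure_iff_dist.1 (tendstoInMeasure_of_tendsto_ae
    (fun n => (hmeas n).aestronglyMeasurable) hslln) _ (sub_pos.2 hc)
  refine tendsto_of_tendsto_of_tendsto_of_le_of_le' tendsto_const_nhds hprob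
    (Eventually.of_forall fun _ => bot_le) ?_
  filter_upwards [eventually_gt_atTop 0] with n hn
  rw [← Measure.infinitePi_map_fin_restrict n, Measure.map_apply (by fun_prop)
    (measurableSet_lt (by fun_prop) (by fun_prop))]
  refine measure_mono fun ω hω => ?_
  simp only [Set.mem_preimage, Set.mem_ofPred_eq,
    Fin.sum_univ_eq_sum_range (fun i => f (ω i))] at hω ⊢
  have hmean_lt : (∑ i ∈ range n, f (ω i)) / n < c := by
    rwa [div_lt_iff₀ (by exact_mod_cast hn)]
  rw [Real.dist_eq, abs_sub_comm]
  linarith [le_abs_self ((∫ x, f x ∂μ) - (∑ i ∈ range n, f (ω i)) / n)]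

theorem tendsto_measure_norm_sq_lt_mul {Ω : Type*} [MeasurableSpace Ω] {P : Measure Ω}
    {ε : ∀ n : ℕ, Ω → EuclideanSpace ℝ (Fin n)} {μ : Measure ℝ} [IsProbabilityMeasure μ]
    (hiid : ∀ n, P.map (fun ω i => ε n ω i) = Measure.pi fun _ : Fin n => μ)
    (hint : Integrable (fun x => x ^ 2) μ) {c : ℝ} (hc : c < ∫ x, x ^ 2 ∂μ) :
    Tendsto (fun n : ℕ => P {ω | ‖ε n ω‖ ^ 2 < c * n}) atTop (𝓝 0) := by
  have hlaw : ∀ n : ℕ, P {ω | ‖ε n ω‖ ^ 2 < c * n} =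
      Measure.pi (fun _ : Fin n => μ) {x | ∑ i, x i ^ 2 < c * n} := fun n => by
    have hmeas : AEMeasurable (fun ω i => ε n ω i) P :=
      AEMeasurable.of_map_ne_zero (hiid n ▸ IsProbabilityMeasure.ne_zero _)
    rw [← hiid n, Measure.map_apply_of_aemeasurable hmeas
      (measurableSet_lt (by fun_prop) (by fun_prop))]
    simp only [EuclideanSpace.norm_sq_eq, Real.norm_eq_abs, sq_abs]
    rfl
  simp only [hlaw]
  exact tendsto_measure_sum_lt_mul_of_lt_integral (measurable_id.pow_const 2) hint hc

end Probability

theorem stmt8_general {Ω : Type*} [MeasureSpace Ω]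
    (I : ∀ n : ℕ, Set (EuclideanSpace ℝ (Fin n)))
    (hne : ∀ n, (I n).Nonempty) (hclosed : ∀ n, IsClosed (I n))
    (hconv : ∀ n, Convex ℝ (I n))
    (S : ∀ n : ℕ, Submodule ℝ (EuclideanSpace ℝ (Fin n)))
    (hSI : ∀ n, (S n : Set (EuclideanSpace ℝ (Fin n))) ⊆ I n)
    (θ₀ : ∀ n : ℕ, EuclideanSpace ℝ (Fin n)) (hθ₀ : ∀ n, θ₀ n ∈ S n)
    (σ : ℝ) (hσ : 0 < σ)
    (ε : ∀ n : ℕ, Ω → EuclideanSpace ℝ (Fin n))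
    (μ : Measure ℝ) [IsProbabilityMeasure μ]
    (hiid : ∀ n, Measure.map (fun ω i => ε n ω i) ℙ = Measure.pi fun _ : Fin n => μ)
    (hvar : ∫ x, x ^ 2 ∂μ = 1)
    (hconsI : smallOp ℙ
      (fun n ω => ‖proj (I n) (θ₀ n + σ • ε n ω) - θ₀ n‖ ^ 2) (fun n => (n : ℝ)))
    (hconsD : smallOp ℙ
      (fun n ω => ‖proj (-(I n)) (θ₀ n + σ • ε n ω) - θ₀ n‖ ^ 2) (fun n => (n : ℝ))) :
    smallOp ℙ
      (fun n ω => Tstat (S n : Set (EuclideanSpace ℝ (Fin n))) (I n) (-(I n))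
        (θ₀ n + σ • ε n ω))
      (fun _ => (1 : ℝ)) := by
  intro δ hδ
  set s := min (1 / 2) (δ / 20)
  have hs₀ : 0 < s := lt_min (by norm_num) (by positivity)
  have hsδ : 20 * s ≤ δ := by linarith [min_le_right (1 / 2 : ℝ) (δ / 20)]
  have hη : 0 < σ ^ 2 * s ^ 2 / 2 := by positivity
  have hnoise := tendsto_measure_norm_sq_lt_mul hiid
    (.of_integral_ne_zero (by rw [hvar]; norm_num)) (c := 1 / 2) (by rw [hvar]; norm_num)
  refine tendsto_measure_of_subset_union (tendsto_measure_of_subset_union (hconsI _ hη)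
    (hconsD _ hη) fun _ => subset_rfl) hnoise fun n ω hT => ?_
  by_contra hout
  simp only [Set.mem_union, Set.mem_ofPred_eq, not_or, not_lt, abs_sq] at hout
  obtain ⟨⟨hI, hD⟩, hε⟩ := hout
  have hy : ‖θ₀ n + σ • ε n ω - θ₀ n‖ ^ 2 = σ ^ 2 * ‖ε n ω‖ ^ 2 := by
    rw [add_sub_cancel_left, norm_smul, mul_pow, Real.norm_eq_abs, sq_abs]
  have hηn : σ ^ 2 * s ^ 2 / 2 * n ≤ s ^ 2 * ‖θ₀ n + σ • ε n ω - θ₀ n‖ ^ 2 := by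
    rw [hy]
    nlinarith [mul_le_mul_of_nonneg_left hε (by positivity : 0 ≤ σ ^ 2 * s ^ 2)]
  have hle := Tstat_le (hne n) (hclosed n) (hconv n) (hSI n) (hθ₀ n) hs₀.le (min_le_left _ _)
    (hI.trans hηn) (hD.trans hηn)
  rw [Set.mem_ofPred_eq, mul_one, abs_of_nonneg (Tstat_nonneg _ _ _ _)] at hT
  linarith

/-- Theorem under H₀: with `I_n` nonempty closed convex cones containing
linear subspaces `S_n` of fixed dimension `k`, `D_n = −I_n`, `θ₀ⁿ ∈ S_n`,
`Yₙ = θ₀ⁿ + σεₙ` with i.i.d. mean-0 variance-1 coordinates, and the consistency conditions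
`‖Π(Yₙ|I_n) − θ₀ⁿ‖² = o_p(n)` and `‖Π(Yₙ|D_n) − θ₀ⁿ‖² = o_p(n)`, the double-cone statistic
satisfies `T(Yₙ) = o_p(1)`. -/
theorem stmt8 {Ω : Type*} [MeasureSpace Ω] [IsProbabilityMeasure (ℙ : Measure Ω)]
    (k : ℕ)
    (I : ∀ n : ℕ, Set (EuclideanSpace ℝ (Fin n)))
    (hne : ∀ n, (I n).Nonempty) (hclosed : ∀ n, IsClosed (I n))
    (hconv : ∀ n, Convex ℝ (I n))
    (hcone : ∀ n, ∀ θ ∈ I n, ∀ t : ℝ, 0 < t → t • θ ∈ I n)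
    (S : ∀ n : ℕ, Submodule ℝ (EuclideanSpace ℝ (Fin n)))
    (hSdim : ∀ n, Module.finrank ℝ (S n) = k)
    (hSI : ∀ n, (S n : Set (EuclideanSpace ℝ (Fin n))) ⊆ I n)
    (θ₀ : ∀ n : ℕ, EuclideanSpace ℝ (Fin n)) (hθ₀ : ∀ n, θ₀ n ∈ S n)
    (σ : ℝ) (hσ : 0 < σ)
    (ε : ∀ n : ℕ, Ω → EuclideanSpace ℝ (Fin n))
    (μ : Measure ℝ) [IsProbabilityMeasure μ]
    (hiid : ∀ n, Measure.map (fun ω i => ε n ω i) ℙ = Measure.pi fun _ : Fin n => μ)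
    (hmean : ∫ x, x ∂μ = 0) (hvar : ∫ x, x ^ 2 ∂μ = 1)
    (hconsI : smallOp ℙ
      (fun n ω => ‖proj (I n) (θ₀ n + σ • ε n ω) - θ₀ n‖ ^ 2) (fun n => (n : ℝ)))
    (hconsD : smallOp ℙ
      (fun n ω => ‖proj (-(I n)) (θ₀ n + σ • ε n ω) - θ₀ n‖ ^ 2) (fun n => (n : ℝ))) :
    smallOp ℙ
      (fun n ω => Tstat (S n : Set (EuclideanSpace ℝ (Fin n))) (I n) (-(I n))
        (θ₀ n + σ • ε n ω))
      (fun _ => (1 : ℝ)) :=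
  stmt8_general I hne hclosed hconv S hSI θ₀ hθ₀ σ hσ ε μ hiid hvar hconsI hconsD
end
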